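/- arXiv:2207.01962 — 2 statements merged into one kernel-verified Lean document; each statement's English description precedes it below -/
import Mathlib

section
/- Let H be a normed space, A : H → H an invertible bounded linear operator and W : H → H a bounded linear operator with ‖A⁻¹W‖ < 1. Suppose a sequence (f̂_k) in H satisfies ‖A f̂_k - W f̂_{k-1}‖ ≤ m‖A‖‖A⁻¹‖η for all k ≥ 1 (with m ≥ 0 and η ≥ 0), and let f_k = (A⁻¹W)^k f̂₀ be the exact iterates with f₀ = f̂₀. Then for all k, ‖f̂_k - f_k‖ ≤ (m‖A‖‖A⁻¹‖²/(1 - ‖A⁻¹W‖))·η. -/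
/-! The computed iterates satisfy `f̂ₖ₊₁ = B f̂ₖ + A⁻¹ rₖ` with `B = A⁻¹W` and residual `rₖ`, so each
step adds a defect of size at most `‖A⁻¹‖ ‖rₖ‖` while `B` contracts the accumulated error by `‖B‖ < 1`.
Summing the geometric series of defects bounds the deviation from the exact iterates `Bᵏ f̂₀`. -/

open NNReal

theorem LipschitzWith.dist_iterate_le_of_dist_succ_le {X : Type*} [PseudoMetricSpace X]
    {f : X → X} {K : ℝ≥0} (hf : LipschitzWith K f) (hK : K < 1) {x : ℕ → X} {δ : ℝ}
    (hx : ∀ k, dist (x (k + 1)) (f (x k)) ≤ δ) (k : ℕ) :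
    dist (x k) (f^[k] (x 0)) ≤ δ / (1 - K) := by
  have hK' : 0 < 1 - (K : ℝ) := sub_pos.mpr (by exact_mod_cast hK)
  induction k with
  | zero =>
    have hδ : 0 ≤ δ := dist_nonneg.trans (hx 0)
    simpa using div_nonneg hδ hK'.le
  | succ k ih =>
    calc dist (x (k + 1)) (f^[k + 1] (x 0))
        ≤ dist (x (k + 1)) (f (x k)) + dist (f (x k)) (f (f^[k] (x 0))) := by
          rw [Function.iterate_succ_apply']
          exact dist_triangle _ _ _
      _ ≤ δ + K * (δ / (1 - K)) := add_le_add (hx k) ((hf.dist_le_mul _ _).trans (by gcongr))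
      _ = δ / (1 - K) := by field_simp; ring

theorem ContinuousLinearEquiv.norm_sub_symm_comp_apply_le {𝕜 E : Type*}
    [NontriviallyNormedField 𝕜] [SeminormedAddCommGroup E] [NormedSpace 𝕜 E] (A : E ≃L[𝕜] E) (W : E →L[𝕜] E) (x y : E) :
    ‖y - ((A.symm : E →L[𝕜] E).comp W) x‖ ≤ ‖(A.symm : E →L[𝕜] E)‖ * ‖A y - W x‖ := by
  have hy : y - ((A.symm : E →L[𝕜] E).comp W) x = (A.symm : E →L[𝕜] E) (A y - W x) := by simp
  rw [hy]
  exact ContinuousLinearMap.le_opNorm _ _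

theorem stmt_6_general {H : Type*} [NormedAddCommGroup H] [NormedSpace ℝ H]
    (A : H ≃L[ℝ] H) (W : H →L[ℝ] H) (m η : ℝ)
    (hcontr : ‖(A.symm : H →L[ℝ] H).comp W‖ < 1)
    (fh : ℕ → H)
    (hres : ∀ k : ℕ, 1 ≤ k →
      ‖A (fh k) - W (fh (k - 1))‖ ≤ m * ‖(A : H →L[ℝ] H)‖ * ‖(A.symm : H →L[ℝ] H)‖ * η) :
    ∀ k : ℕ, ‖fh k - (((A.symm : H →L[ℝ] H).comp W) ^ k) (fh 0)‖ ≤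
      (m * ‖(A : H →L[ℝ] H)‖ * ‖(A.symm : H →L[ℝ] H)‖ ^ 2 /
        (1 - ‖(A.symm : H →L[ℝ] H).comp W‖)) * η := by
  set B : H →L[ℝ] H := (A.symm : H →L[ℝ] H).comp W
  have hstep : ∀ k, dist (fh (k + 1)) (B (fh k)) ≤
      ‖(A.symm : H →L[ℝ] H)‖ * (m * ‖(A : H →L[ℝ] H)‖ * ‖(A.symm : H →L[ℝ] H)‖ * η) := fun k ↦ by
    rw [dist_eq_norm]
    exact (A.norm_sub_symm_comp_apply_le W _ _).trans
      (mul_le_mul_of_nonneg_left (hres (k + 1) k.succ_pos) (norm_nonneg _))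
  intro k
  have h := B.lipschitz.dist_iterate_le_of_dist_succ_le (by simpa [← NNReal.coe_lt_coe]) hstep k
  rw [dist_eq_norm, ← FunLike.coe_pow_eq_iterate, coe_nnnorm] at h
  convert h using 1
  ring

theorem stmt_6 {H : Type*} [NormedAddCommGroup H] [NormedSpace ℝ H]
    (A : H ≃L[ℝ] H) (W : H →L[ℝ] H) (m η : ℝ) (hm : 0 ≤ m) (hη : 0 ≤ η)
    (hcontr : ‖(A.symm : H →L[ℝ] H).comp W‖ < 1)
    (fh : ℕ → H)
    (hres : ∀ k : ℕ, 1 ≤ k →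
      ‖A (fh k) - W (fh (k - 1))‖ ≤ m * ‖(A : H →L[ℝ] H)‖ * ‖(A.symm : H →L[ℝ] H)‖ * η) :
    ∀ k : ℕ, ‖fh k - (((A.symm : H →L[ℝ] H).comp W) ^ k) (fh 0)‖ ≤
      (m * ‖(A : H →L[ℝ] H)‖ * ‖(A.symm : H →L[ℝ] H)‖ ^ 2 /
        (1 - ‖(A.symm : H →L[ℝ] H).comp W‖)) * η :=
  stmt_6_general A W m η hcontr fh hres
end

section
/- Let H be a normed space, G : H → H Lipschitz with constant L, Δt > 0 with ΔtL ≤ 1/2, and suppose f̂₁, f̃₁ are exact implicit Euler steps from f̂₀, f̃₀ respectively. If f̂₁' and f̃₁' satisfy ‖f̂₁' - f̂₁‖ ≤ δ and ‖f̃₁' - f̃₁‖ ≤ δ, then ‖f̂₁' - f̃₁'‖ ≤ (1 + 2LΔt)‖f̂₀ - f̃₀‖ + 2δ. -/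
/-!
Subtracting the two implicit Euler equations and using the Lipschitz bound gives
`(1 - Δt L) ‖f̂₁ - f̃₁‖ ≤ ‖f̂₀ - f̃₀‖`; for `0 ≤ Δt L ≤ 1/2` one has `(1 - Δt L)⁻¹ ≤ 1 + 2 L Δt`.
The inexact steps then cost `δ` each by the triangle inequality.
-/

theorem one_sub_norm_mul_norm_sub_le_of_implicit_euler {𝕜 E : Type*} [NormedField 𝕜]
    [SeminormedAddCommGroup E] [NormedSpace 𝕜 E] {G : E → E} {L : ℝ}
    (hG : ∀ a b, ‖G a - G b‖ ≤ L * ‖a - b‖) (Δt : 𝕜) {x₀ x₁ y₀ y₁ : E}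
    (hx : x₁ = x₀ + Δt • G x₁) (hy : y₁ = y₀ + Δt • G y₁) :
    (1 - ‖Δt‖ * L) * ‖x₁ - y₁‖ ≤ ‖x₀ - y₀‖ := by
  have hsub : x₁ - y₁ = (x₀ - y₀) + Δt • (G x₁ - G y₁) := by
    conv_lhs => rw [hx, hy]
    rw [smul_sub]
    abel
  have hle : ‖x₁ - y₁‖ ≤ ‖x₀ - y₀‖ + ‖Δt‖ * (L * ‖x₁ - y₁‖) :=
    calc ‖x₁ - y₁‖ ≤ ‖x₀ - y₀‖ + ‖Δt • (G x₁ - G y₁)‖ := hsub ▸ norm_add_le _ _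
      _ ≤ ‖x₀ - y₀‖ + ‖Δt‖ * (L * ‖x₁ - y₁‖) := by
        rw [norm_smul]
        gcongr
        exact hG _ _
  linarith

theorem le_one_add_two_mul_mul_of_one_sub_mul_le {a r s : ℝ} (ha₀ : 0 ≤ a) (ha : a ≤ 1 / 2)
    (hs : 0 ≤ s) (h : (1 - a) * r ≤ s) : r ≤ (1 + 2 * a) * s := by
  have hfac : 1 ≤ (1 + 2 * a) * (1 - a) := by nlinarith
  nlinarith [mul_le_mul_of_nonneg_left h (by linarith : (0 : ℝ) ≤ 1 + 2 * a)]

theorem stmt_12_general {H : Type*} [NormedAddCommGroup H] [NormedSpace ℝ H]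
    (G : H → H) (L Δt δ : ℝ) (hL : 0 ≤ L)
    (hLip : ∀ a b : H, ‖G a - G b‖ ≤ L * ‖a - b‖)
    (hΔt : 0 < Δt) (hstep : Δt * L ≤ 1/2)
    (fh₀ fh₁ ft₀ ft₁ fh₁' ft₁' : H)
    (hfh : fh₁ = fh₀ + Δt • G fh₁)
    (hft : ft₁ = ft₀ + Δt • G ft₁)
    (hfh' : ‖fh₁' - fh₁‖ ≤ δ)
    (hft' : ‖ft₁' - ft₁‖ ≤ δ) :
    ‖fh₁' - ft₁'‖ ≤ (1 + 2 * L * Δt) * ‖fh₀ - ft₀‖ + 2 * δ := by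
  have hexact : ‖fh₁ - ft₁‖ ≤ (1 + 2 * L * Δt) * ‖fh₀ - ft₀‖ := by
    have h := one_sub_norm_mul_norm_sub_le_of_implicit_euler hLip Δt hfh hft
    rw [Real.norm_of_nonneg hΔt.le] at h
    rw [mul_assoc, mul_comm L]
    exact le_one_add_two_mul_mul_of_one_sub_mul_le (mul_nonneg hΔt.le hL) hstep
      (norm_nonneg _) h
  calc ‖fh₁' - ft₁'‖ ≤ ‖fh₁' - fh₁‖ + ‖fh₁ - ft₁‖ + ‖ft₁' - ft₁‖ := by
        simpa only [dist_eq_norm, norm_sub_rev ft₁] using dist_triangle4 fh₁' fh₁ ft₁ ft₁'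
    _ ≤ (1 + 2 * L * Δt) * ‖fh₀ - ft₀‖ + 2 * δ := by linarith

theorem stmt_12 {H : Type*} [NormedAddCommGroup H] [NormedSpace ℝ H]
    (G : H → H) (L Δt δ : ℝ) (hL : 0 ≤ L) (hδ : 0 ≤ δ)
    (hLip : ∀ a b : H, ‖G a - G b‖ ≤ L * ‖a - b‖)
    (hΔt : 0 < Δt) (hstep : Δt * L ≤ 1/2)
    (fh₀ fh₁ ft₀ ft₁ fh₁' ft₁' : H)
    (hfh : fh₁ = fh₀ + Δt • G fh₁)
    (hft : ft₁ = ft₀ + Δt • G ft₁)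
    (hfh' : ‖fh₁' - fh₁‖ ≤ δ)
    (hft' : ‖ft₁' - ft₁‖ ≤ δ) :
    ‖fh₁' - ft₁'‖ ≤ (1 + 2 * L * Δt) * ‖fh₀ - ft₀‖ + 2 * δ :=
  stmt_12_general G L Δt δ hL hLip hΔt hstep fh₀ fh₁ ft₀ ft₁ fh₁' ft₁' hfh hft hfh' hft'
end
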